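/- For all g, h ⊆ Ω° (where Ω := Finset.univ) one has g ∪ h ⊆ Ω° and C_g * C_h = ((k_{g ∩ h} : ℕ) : F) • C_{g ∪ h}. -/
import Mathlib


open Matrix Finset
open scoped Classical

set_option synthInstance.maxHeartbeats 1000000
set_option maxHeartbeats 2000000

noncomputable section

variable {n : ℕ}

/-- The disagreement set of two tuples. -/
def dis {U : Fin n → Type} [∀ i, DecidableEq (U i)] (x y : ∀ i, U i) : Finset (Fin n) :=
  Finset.univ.filter fun i => x i ≠ y i

/-- `S° = {i ∈ S | 2 < |U i|}`. -/
def circ (U : Fin n → Type) [∀ i, Fintype (U i)] (S : Finset (Fin n)) : Finset (Fin n) :=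
  S.filter fun i => 2 < Fintype.card (U i)

/-- The valency `k_S`. -/
def val (U : Fin n → Type) [∀ i, Fintype (U i)] (S : Finset (Fin n)) : ℕ :=
  ∏ i ∈ S, (Fintype.card (U i) - 1)

variable (U : Fin n → Type) [∀ i, Fintype (U i)] [∀ i, DecidableEq (U i)]
variable (F : Type) [Field F]

/-- The adjacency matrix `A_S`. -/
def Amat (S : Finset (Fin n)) : Matrix (∀ i, U i) (∀ i, U i) F :=
  Matrix.of fun x y => if dis x y = S then 1 else 0

/-- The dual idempotent `E_S^*(x₀)`. -/
def Emat (x₀ : ∀ i, U i) (S : Finset (Fin n)) : Matrix (∀ i, U i) (∀ i, U i) F :=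
  Matrix.diagonal fun y => if dis x₀ y = S then 1 else 0

/-- The Terwilliger `F`-algebra of the factorial scheme with respect to the base point `x₀`:
the subalgebra of `Matrix X X F` generated by the adjacency matrices and dual idempotents. -/
def Tw (x₀ : ∀ i, U i) : Subalgebra F (Matrix (∀ i, U i) (∀ i, U i) F) :=
  Algebra.adjoin F ({M | ∃ S, M = Amat U F S} ∪ {M | ∃ S, M = Emat U F x₀ S})

/-- `B_{g,h,i} = ∑_{g △ i ⊆ j ⊆ h} E_g A_j E_i`. -/
def Bmat (x₀ : ∀ i, U i) (g h i : Finset (Fin n)) : Matrix (∀ i, U i) (∀ i, U i) F :=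
  ∑ j ∈ Finset.univ.filter (fun j => symmDiff g i ⊆ j ∧ j ⊆ h),
    Emat U F x₀ g * Amat U F j * Emat U F x₀ i

/-- `C_g = ∑_h k_{g \ h} • B_{h, g ∩ h, h}`. -/
def Cmat (x₀ : ∀ i, U i) (g : Finset (Fin n)) : Matrix (∀ i, U i) (∀ i, U i) F :=
  ∑ h : Finset (Fin n), ((val U (g \ h) : ℕ) : F) • Bmat U F x₀ h (g ∩ h) h

lemma mem_dis {U : Fin n → Type} [∀ i, DecidableEq (U i)] {x y : ∀ i, U i} {i : Fin n} :
    i ∈ dis x y ↔ x i ≠ y i := by simp [dis]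

lemma dis_subset_union {U : Fin n → Type} [∀ i, DecidableEq (U i)] (x₀ x y : ∀ i, U i) :
    dis x y ⊆ dis x₀ x ∪ dis x₀ y := by
  intro i hi
  rw [mem_dis] at hi
  simp only [Finset.mem_union, mem_dis]
  by_contra hc
  push_neg at hc
  exact hi (hc.1.symm.trans hc.2)

lemma Cmat_apply (x₀ x y : ∀ i, U i) (g : Finset (Fin n)) :
    Cmat U F x₀ g x y =
      if dis x₀ y = dis x₀ x ∧ dis x y ⊆ g ∩ dis x₀ x
      then ((val U (g \ dis x₀ x) : ℕ) : F) else 0 := by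
  have key : ∀ h j : Finset (Fin n),
      (Emat U F x₀ h * Amat U F j * Emat U F x₀ h) x y =
        (if dis x₀ x = h then (1:F) else 0) * (if dis x y = j then 1 else 0) *
          (if dis x₀ y = h then 1 else 0) := by
    intro h j
    simp [Emat, Amat, Matrix.mul_diagonal, Matrix.diagonal_mul]
  simp only [Cmat, Bmat, Matrix.sum_apply, Matrix.smul_apply, smul_eq_mul, key]
  rw [Finset.sum_eq_single (dis x₀ x)]
  · simp only [if_pos rfl, one_mul, symmDiff_self, bot_eq_empty, empty_subset, true_and,
      ite_mul, zero_mul, one_mul, if_true]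
    rw [Finset.sum_ite_eq]
    simp only [Finset.mem_filter, Finset.mem_univ, true_and]
    by_cases hy : dis x₀ y = dis x₀ x <;> by_cases hsub : dis x y ⊆ g ∩ dis x₀ x <;>
      simp [hy, hsub]
  · intro b _ hb
    rw [if_neg (fun e => hb e.symm)]
    simp
  · simp

lemma sum_indicator (x₀ x y : ∀ i, U i) (S g h : Finset (Fin n))
    (hx : dis x₀ x = S) (hy : dis x₀ y = S) :
    ∑ z : ∀ i, U i,
        (if dis x₀ z = S ∧ dis x z ⊆ g ∩ S ∧ dis z y ⊆ h ∩ S then (1:F) else 0) =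
      if dis x y ⊆ g ∪ h then ((val U (g ∩ h ∩ S) : ℕ) : F) else 0 := by
  set c : ∀ i : Fin n, U i → F := fun i u =>
    if ((u ≠ x₀ i ↔ i ∈ S) ∧ (i ∉ g ∩ S → u = x i) ∧ (i ∉ h ∩ S → u = y i)) then 1 else 0
    with hc
  have step1 : ∀ z : ∀ i, U i,
      (if dis x₀ z = S ∧ dis x z ⊆ g ∩ S ∧ dis z y ⊆ h ∩ S then (1:F) else 0) =
        ∏ i, c i (z i) := by
    intro z
    by_cases hP : dis x₀ z = S ∧ dis x z ⊆ g ∩ S ∧ dis z y ⊆ h ∩ S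
    · rw [if_pos hP, eq_comm]
      apply Finset.prod_eq_one
      intro i _
      rw [hc]
      refine if_pos ⟨?_, ?_, ?_⟩
      · rw [← hP.1, mem_dis, ne_comm]
      · intro hi
        by_contra hne
        exact hi (hP.2.1 (mem_dis.mpr (Ne.symm hne)))
      · intro hi
        by_contra hne
        exact hi (hP.2.2 (mem_dis.mpr hne))
    · rw [if_neg hP, eq_comm]
      rw [not_and_or, not_and_or] at hP
      rcases hP with hP | hP | hP
      · rw [Finset.ext_iff] at hP
        push_neg at hP
        obtain ⟨i, hi⟩ := hP
        apply Finset.prod_eq_zero (Finset.mem_univ i)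
        rw [hc]
        refine if_neg fun hco => ?_
        rcases hi with ⟨h1, h2⟩ | ⟨h1, h2⟩
        · exact h2 (hco.1.mp (Ne.symm (mem_dis.mp h1)))
        · exact h1 (mem_dis.mpr (Ne.symm (hco.1.mpr h2)))
      · rw [Finset.not_subset] at hP
        obtain ⟨i, hi1, hi2⟩ := hP
        apply Finset.prod_eq_zero (Finset.mem_univ i)
        rw [hc]
        exact if_neg fun hco => (mem_dis.mp hi1) (hco.2.1 hi2).symm
      · rw [Finset.not_subset] at hP
        obtain ⟨i, hi1, hi2⟩ := hP
        apply Finset.prod_eq_zero (Finset.mem_univ i)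
        rw [hc]
        exact if_neg fun hco => (mem_dis.mp hi1) (hco.2.2 hi2)
  simp_rw [step1]
  rw [← Fintype.prod_sum c]
  by_cases hxy : dis x y ⊆ g ∪ h
  · rw [if_pos hxy]
    have hsi : ∀ i : Fin n, (∑ u : U i, c i u) =
        if i ∈ g ∩ h ∩ S then ((Fintype.card (U i) - 1 : ℕ) : F) else 1 := by
      intro i
      by_cases hiS : i ∈ S
      · have hxne : x₀ i ≠ x i := mem_dis.mp (hx ▸ hiS)
        have hyne : x₀ i ≠ y i := mem_dis.mp (hy ▸ hiS)
        by_cases hig : i ∈ g <;> by_cases hih : i ∈ h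
        · -- i ∈ g ∩ h ∩ S : condition is u ≠ x₀ i
          rw [if_pos (by simp [hig, hih, hiS])]
          have : ∀ u : U i, c i u = if u ≠ x₀ i then 1 else 0 := by
            intro u
            rw [hc]
            by_cases hu : u = x₀ i
            · simp [hu, hiS]
            · simp [hu, hiS, Finset.mem_inter, hig, hih]
          simp_rw [this]
          rw [Finset.sum_boole, Finset.filter_ne', Finset.card_erase_of_mem (Finset.mem_univ _),
            Finset.card_univ]
        · -- i ∈ g, i ∉ h, i ∈ S : condition is u = y i
          rw [if_neg (by simp [hih])]
          have : ∀ u : U i, c i u = if u = y i then 1 else 0 := by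
            intro u
            rw [hc]
            by_cases hu : u = y i
            · subst hu
              simp [hiS, hig, Finset.mem_inter, hih, Ne.symm hyne]
            · simp [hu, Finset.mem_inter, hih]
          simp_rw [this]
          simp
        · -- i ∉ g, i ∈ h, i ∈ S : condition is u = x i
          rw [if_neg (by simp [hig])]
          have : ∀ u : U i, c i u = if u = x i then 1 else 0 := by
            intro u
            rw [hc]
            by_cases hu : u = x i
            · subst hu
              simp [hiS, hih, Finset.mem_inter, hig, Ne.symm hxne]
            · simp [hu, Finset.mem_inter, hig]
          simp_rw [this]
          simp
        · -- i ∉ g, i ∉ h, i ∈ S : x i = y i since dis x y ⊆ g ∪ h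
          rw [if_neg (by simp [hig])]
          have hxyeq : x i = y i := by
            by_contra hne
            have := hxy (mem_dis.mpr hne)
            simp [hig, hih] at this
          have : ∀ u : U i, c i u = if u = x i then 1 else 0 := by
            intro u
            rw [hc]
            by_cases hu : u = x i
            · subst hu
              simp [hiS, Finset.mem_inter, hig, hih, Ne.symm hxne, Ne.symm hyne, hxyeq]
            · simp [hu, Finset.mem_inter, hig]
          simp_rw [this]
          simp
      · -- i ∉ S : condition is u = x₀ i
        rw [if_neg (by simp [hiS])]
        have hxeq : x₀ i = x i := by
          by_contra hne; exact hiS (hx ▸ mem_dis.mpr hne)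
        have hyeq : x₀ i = y i := by
          by_contra hne; exact hiS (hy ▸ mem_dis.mpr hne)
        have : ∀ u : U i, c i u = if u = x₀ i then 1 else 0 := by
          intro u
          rw [hc]
          by_cases hu : u = x₀ i
          · subst hu
            simp [hiS, Finset.mem_inter, ← hxeq, ← hyeq]
          · simp [hu, hiS]
        simp_rw [this]
        simp
    simp_rw [hsi]
    rw [Finset.prod_ite_mem Finset.univ (g ∩ h ∩ S), Finset.univ_inter]
    rw [_root_.val, Nat.cast_prod]
  · rw [if_neg hxy]
    rw [Finset.not_subset] at hxy
    obtain ⟨i, hi1, hi2⟩ := hxy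
    have hiS : i ∈ S := by
      have := dis_subset_union x₀ x y hi1
      rw [hx, hy, Finset.union_self] at this
      exact this
    apply Finset.prod_eq_zero (Finset.mem_univ i)
    have : ∀ u : U i, c i u = 0 := by
      intro u
      rw [hc]
      refine if_neg fun hco => ?_
      have h1 : u = x i := hco.2.1 fun m => hi2 (Finset.mem_union_left _ (Finset.mem_inter.mp m).1)
      have h2 : u = y i := hco.2.2 fun m => hi2 (Finset.mem_union_right _ (Finset.mem_inter.mp m).1)
      exact mem_dis.mp hi1 (h1 ▸ h2)
    rw [Finset.sum_congr rfl fun u _ => this u]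
    simp

lemma val_identity (g h S : Finset (Fin n)) :
    val U (g \ S) * val U (h \ S) * val U (g ∩ h ∩ S) =
      val U (g ∩ h) * val U ((g ∪ h) \ S) := by
  have e1 : (g \ S) ∪ (h \ S) = (g ∪ h) \ S := (Finset.union_sdiff_distrib g h S).symm
  have e2 : (g \ S) ∩ (h \ S) = (g ∩ h) \ S := by
    ext i; simp only [Finset.mem_inter, Finset.mem_sdiff]; tauto
  have e3 : ((g ∩ h) \ S) ∪ (g ∩ h ∩ S) = g ∩ h := Finset.sdiff_union_inter _ _
  have d3 : Disjoint ((g ∩ h) \ S) (g ∩ h ∩ S) := Finset.disjoint_sdiff_inter _ _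
  unfold _root_.val
  calc (∏ i ∈ g \ S, (Fintype.card (U i) - 1)) * (∏ i ∈ h \ S, (Fintype.card (U i) - 1)) *
        ∏ i ∈ g ∩ h ∩ S, (Fintype.card (U i) - 1)
      = ((∏ i ∈ (g \ S) ∪ (h \ S), (Fintype.card (U i) - 1)) *
          ∏ i ∈ (g \ S) ∩ (h \ S), (Fintype.card (U i) - 1)) *
          ∏ i ∈ g ∩ h ∩ S, (Fintype.card (U i) - 1) := by
        rw [Finset.prod_union_inter]
    _ = (∏ i ∈ (g ∪ h) \ S, (Fintype.card (U i) - 1)) *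
          ((∏ i ∈ (g ∩ h) \ S, (Fintype.card (U i) - 1)) *
            ∏ i ∈ g ∩ h ∩ S, (Fintype.card (U i) - 1)) := by
        rw [e1, e2, mul_assoc]
    _ = (∏ i ∈ (g ∪ h) \ S, (Fintype.card (U i) - 1)) *
          ∏ i ∈ g ∩ h, (Fintype.card (U i) - 1) := by
        rw [← Finset.prod_union d3, e3]
    _ = _ := mul_comm _ _

theorem stmt7' (x₀ : ∀ i, U i) (g h : Finset (Fin n)) :
    Cmat U F x₀ g * Cmat U F x₀ h = ((val U (g ∩ h) : ℕ) : F) • Cmat U F x₀ (g ∪ h) := by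
  ext x y
  rw [Matrix.mul_apply, Matrix.smul_apply, smul_eq_mul, Cmat_apply]
  by_cases hy : dis x₀ y = dis x₀ x
  · have htrans : ∀ z : ∀ i, U i,
        Cmat U F x₀ g x z * Cmat U F x₀ h z y =
          ((val U (g \ dis x₀ x) : ℕ) : F) * ((val U (h \ dis x₀ x) : ℕ) : F) *
            (if dis x₀ z = dis x₀ x ∧ dis x z ⊆ g ∩ dis x₀ x ∧ dis z y ⊆ h ∩ dis x₀ x
              then (1:F) else 0) := by
      intro z
      rw [Cmat_apply, Cmat_apply]
      by_cases hz : dis x₀ z = dis x₀ x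
      · have hy' : dis x₀ y = dis x₀ z := hy.trans hz.symm
        by_cases h1 : dis x z ⊆ g ∩ dis x₀ x <;>
          by_cases h2 : dis z y ⊆ h ∩ dis x₀ x <;>
          simp [hz, hy', h1, h2]
      · have hy' : ¬ dis x₀ y = dis x₀ z := fun e => hz (e.symm.trans hy)
        simp [hz, hy']
    simp_rw [htrans]
    rw [← Finset.mul_sum, sum_indicator U F x₀ x y (dis x₀ x) g h rfl hy]
    by_cases hxy : dis x y ⊆ g ∪ h
    · rw [if_pos hxy]
      have hsub : dis x y ⊆ (g ∪ h) ∩ dis x₀ x := by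
        refine Finset.subset_inter hxy ?_
        have := dis_subset_union x₀ x y
        rwa [hy, Finset.union_self] at this
      rw [if_pos ⟨hy, hsub⟩]
      rw [← Nat.cast_mul, ← Nat.cast_mul, ← Nat.cast_mul, val_identity]
    · have : ¬ (dis x₀ y = dis x₀ x ∧ dis x y ⊆ (g ∪ h) ∩ dis x₀ x) := by
        rintro ⟨-, hs⟩
        exact hxy fun i hi => (Finset.mem_inter.mp (hs hi)).1
      rw [if_neg this, if_neg hxy]
      simp
  · rw [if_neg (fun c => hy c.1), mul_zero]
    apply Finset.sum_eq_zero
    intro z _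
    rw [Cmat_apply, Cmat_apply]
    by_cases hz : dis x₀ z = dis x₀ x
    · have hy' : ¬ dis x₀ y = dis x₀ z := fun e => hy (e.trans hz)
      simp [hy']
    · simp [hz]

/-- For `g, h ⊆ Ω°`: `g ∪ h ⊆ Ω°` and `C_g C_h = k_{g∩h} • C_{g∪h}`. -/
theorem stmt7 (hn : 1 ≤ n) (hU : ∀ i, 2 ≤ Fintype.card (U i)) (x₀ : ∀ i, U i)
    (g h : Finset (Fin n)) (hg : g ⊆ circ U Finset.univ) (hh : h ⊆ circ U Finset.univ) :
    g ∪ h ⊆ circ U Finset.univ ∧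
    Cmat U F x₀ g * Cmat U F x₀ h = ((val U (g ∩ h) : ℕ) : F) • Cmat U F x₀ (g ∪ h) := by
  constructor
  · exact Finset.union_subset hg hh
  · exact stmt7' U F x₀ g h


end
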